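/- arXiv:1401.8047 — 6 statements merged into one kernel-verified Lean document; each statement's English description precedes it below -/
import Mathlib

section
/- Let (X, d) be a pseudometric space, μ a Borel measure on X, x ∈ X and r > 0 such that 0 < μ(B(x,ρ)) < ∞ for all ρ ∈ (0, 2r]. Let C > 1 and let δ : (0, 2r] → (0, ∞) be nondecreasing with δ(ρ) > 0 for all ρ, and suppose that μ(B(x, ρ + δ(ρ))) ≤ 2C · μ(B(x, ρ)) for every ρ ∈ [r, 2r]. Then μ(B(x, 2r)) ≤ (2C)^{r/δ(r) + 1} · μ(B(x, r)). -/
open Metric MeasureTheory Set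

/-! Since `δ` is nondecreasing, a step of fixed length `δ r` from any radius in `[r, 2r]` enlarges
the ball by at most the factor `2C`, and `⌈r / δ r⌉ ≤ r / δ r + 1` such steps lead from `r`
past `2r`. -/

theorem le_pow_mul_of_le_mul_add {f : ℝ → ENNReal} {a b d : ℝ} {K : ENNReal} (hd : 0 ≤ d)
    (hstep : ∀ ρ ∈ Icc a b, f (ρ + d) ≤ K * f ρ) :
    ∀ n : ℕ, a + n * d ≤ b + d → f (a + n * d) ≤ K ^ n * f a
  | 0, _ => by simp
  | n + 1, hn => by
    have hmem : a + n * d ∈ Icc a b := by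
      push_cast at hn
      constructor <;> nlinarith
    calc f (a + (n + 1 : ℕ) * d) = f (a + n * d + d) := by push_cast; ring_nf
      _ ≤ K * f (a + n * d) := hstep _ hmem
      _ ≤ K * (K ^ n * f a) := by
        gcongr
        exact le_pow_mul_of_le_mul_add hd hstep n (by linarith [hmem.2])
      _ = K ^ (n + 1) * f a := by ring

theorem Monotone.le_rpow_mul_of_le_mul_add {f : ℝ → ENNReal} (hf : Monotone f) {a L d : ℝ}
    {K : ENNReal} (hK : 1 ≤ K) (hL : 0 ≤ L) (hd : 0 < d)
    (hstep : ∀ ρ ∈ Icc a (a + L), f (ρ + d) ≤ K * f ρ) :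
    f (a + L) ≤ K ^ (L / d + 1) * f a := by
  set N := ⌈L / d⌉₊
  have hN : (N : ℝ) < L / d + 1 := Nat.ceil_lt_add_one (div_nonneg hL hd.le)
  have hLN : L ≤ N * d := (div_le_iff₀ hd).mp (Nat.le_ceil _)
  have hNL : N * d < L + d := by
    rwa [← lt_div_iff₀ hd, add_div, div_self hd.ne']
  calc f (a + L) ≤ f (a + N * d) := hf (by linarith)
    _ ≤ K ^ N * f a := le_pow_mul_of_le_mul_add hd.le hstep N (by linarith)
    _ ≤ K ^ (L / d + 1) * f a := by
      gcongr
      rw [← ENNReal.rpow_natCast]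
      exact ENNReal.rpow_le_rpow_of_exponent_le hK hN.le

theorem stmt0_general {X : Type*} [PseudoMetricSpace X] [MeasurableSpace X]
    (μ : Measure X) (x : X) (r : ℝ) (hr : 0 < r)
    (C : ℝ) (hC : 1 < C)
    (δ : ℝ → ℝ) (hδpos : ∀ ρ ∈ Ioc (0 : ℝ) (2 * r), 0 < δ ρ)
    (hδmono : MonotoneOn δ (Ioc (0 : ℝ) (2 * r)))
    (hdoub : ∀ ρ ∈ Icc r (2 * r),
      μ (ball x (ρ + δ ρ)) ≤ ENNReal.ofReal (2 * C) * μ (ball x ρ)) :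
    μ (ball x (2 * r)) ≤ ENNReal.ofReal (2 * C) ^ (r / δ r + 1) * μ (ball x r) := by
  have hr_mem : r ∈ Ioc (0 : ℝ) (2 * r) := ⟨hr, by linarith⟩
  have hmono : Monotone fun ρ => μ (ball x ρ) := fun _ _ h => measure_mono (ball_subset_ball h)
  have hstep : ∀ ρ ∈ Icc r (r + r),
      μ (ball x (ρ + δ r)) ≤ ENNReal.ofReal (2 * C) * μ (ball x ρ) := by
    intro ρ hρ
    rw [← two_mul] at hρ
    have hδ : δ r ≤ δ ρ := hδmono hr_mem ⟨by linarith [hρ.1], hρ.2⟩ hρ.1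
    exact (hmono (by linarith)).trans (hdoub ρ hρ)
  rw [two_mul]
  exact hmono.le_rpow_mul_of_le_mul_add (ENNReal.one_le_ofReal.mpr (by linarith)) hr.le
    (hδpos r hr_mem) hstep

/-- If the metric balls around `x` have non-doubling order at most `δ` with constant `2C`
on radii in `[r, 2r]`, then `μ(B(x,2r)) ≤ (2C)^(r/δ(r)+1) · μ(B(x,r))`. -/
theorem stmt0 {X : Type*} [PseudoMetricSpace X] [MeasurableSpace X] [BorelSpace X]
    (μ : Measure X) (x : X) (r : ℝ) (hr : 0 < r)
    (hμ : ∀ ρ ∈ Ioc (0 : ℝ) (2 * r), 0 < μ (ball x ρ) ∧ μ (ball x ρ) < ⊤)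
    (C : ℝ) (hC : 1 < C)
    (δ : ℝ → ℝ) (hδpos : ∀ ρ ∈ Ioc (0 : ℝ) (2 * r), 0 < δ ρ)
    (hδmono : MonotoneOn δ (Ioc (0 : ℝ) (2 * r)))
    (hdoub : ∀ ρ ∈ Icc r (2 * r),
      μ (ball x (ρ + δ ρ)) ≤ ENNReal.ofReal (2 * C) * μ (ball x ρ)) :
    μ (ball x (2 * r)) ≤ ENNReal.ofReal (2 * C) ^ (r / δ r + 1) * μ (ball x r) :=
  stmt0_general μ x r hr C hC δ hδpos hδmono hdoub
end

section
/- Let (X, d) be a pseudometric space, μ a Borel measure on X, x ∈ X and r > 0 such that 0 < μ(B(x,ρ)) < ∞ for all ρ ∈ (0, 2r]. Let δ : (0, 2r] → (0, ∞) be nondecreasing, and suppose that μ(B(x, ρ + δ(ρ))) ≥ (5/4) · μ(B(x, ρ)) for every ρ ∈ [r, 2r]. Then μ(B(x, 2r)) ≥ (5/4)^{r/δ(2r) − 1} · μ(B(x, r)). -/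
/-!
Iterate the radius map `ρ ↦ ρ + δ ρ` starting from `r`. Since `δ ≤ δ(2r)` on `[r, 2r]`, the
first `⌊r / δ(2r)⌋` iterates stay in `[r, 2r]`, and each of them multiplies the measure of the
ball by at least `5/4`.
-/

open Metric MeasureTheory Set
open scoped ENNReal

theorem pow_mul_le_apply_iterate (f : ℝ → ℝ≥0∞) (g : ℝ → ℝ) (c : ℝ≥0∞) (s : Set ℝ)
    (hgrow : ∀ ρ ∈ s, c * f ρ ≤ f (g ρ)) (a : ℝ) :
    ∀ n : ℕ, (∀ k < n, g^[k] a ∈ s) → c ^ n * f a ≤ f (g^[n] a)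
  | 0, _ => by simp
  | n + 1, hs => by
    have ih := pow_mul_le_apply_iterate f g c s hgrow a n fun k hk => hs k (by omega)
    calc c ^ (n + 1) * f a = c * (c ^ n * f a) := by ring
      _ ≤ c * f (g^[n] a) := by gcongr
      _ ≤ f (g^[n + 1] a) := by
        rw [Function.iterate_succ_apply']
        exact hgrow _ (hs n n.lt_succ_self)

theorem iterate_add_mem_Icc {δ : ℝ → ℝ} {a b D : ℝ} (hD : 0 ≤ D)
    (hδ : ∀ ρ ∈ Icc a b, 0 ≤ δ ρ ∧ δ ρ ≤ D) :
    ∀ k : ℕ, a + k * D ≤ b → (fun ρ => ρ + δ ρ)^[k] a ∈ Icc a (a + k * D)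
  | 0, _ => by simp
  | k + 1, hk => by
    push_cast at hk
    obtain ⟨hlo, hhi⟩ := iterate_add_mem_Icc hD hδ k (by linarith)
    obtain ⟨hδ₀, hδD⟩ := hδ _ ⟨hlo, by linarith⟩
    rw [Function.iterate_succ_apply']
    push_cast
    constructor <;> linarith

theorem ENNReal.rpow_sub_one_le_pow_floor {c : ℝ≥0∞} (hc : 1 ≤ c) (t : ℝ) :
    c ^ (t - 1) ≤ c ^ ⌊t⌋₊ := by
  rw [← ENNReal.rpow_natCast]
  exact ENNReal.rpow_le_rpow_of_exponent_le hc (Nat.sub_one_lt_floor t).le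

theorem stmt1_general {X : Type*} [PseudoMetricSpace X] [MeasurableSpace X]
    (μ : Measure X) (x : X) (r : ℝ) (hr : 0 < r)
    (δ : ℝ → ℝ) (hδpos : ∀ ρ ∈ Ioc (0 : ℝ) (2 * r), 0 < δ ρ)
    (hδmono : MonotoneOn δ (Ioc (0 : ℝ) (2 * r)))
    (hgrow : ∀ ρ ∈ Icc r (2 * r),
      ENNReal.ofReal (5 / 4) * μ (ball x ρ) ≤ μ (ball x (ρ + δ ρ))) :
    ENNReal.ofReal (5 / 4) ^ (r / δ (2 * r) - 1) * μ (ball x r) ≤ μ (ball x (2 * r)) := by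
  set D := δ (2 * r)
  set N := ⌊r / D⌋₊
  have h2r : 2 * r ∈ Ioc 0 (2 * r) := ⟨by linarith, le_rfl⟩
  have hD : 0 < D := hδpos _ h2r
  have hδ : ∀ ρ ∈ Icc r (2 * r), 0 ≤ δ ρ ∧ δ ρ ≤ D := fun ρ hρ =>
    have hρ' : ρ ∈ Ioc 0 (2 * r) := ⟨hr.trans_le hρ.1, hρ.2⟩
    ⟨(hδpos ρ hρ').le, hδmono hρ' h2r hρ.2⟩
  have hsteps : ∀ k ≤ N, r + k * D ≤ 2 * r := fun k hk => by
    have : (k : ℝ) * D ≤ N * D := by gcongr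
    have : (N : ℝ) * D ≤ r := (le_div_iff₀ hD).1 (Nat.floor_le (div_pos hr hD).le)
    linarith
  have hradii : ∀ k ≤ N, (fun ρ => ρ + δ ρ)^[k] r ∈ Icc r (2 * r) := fun k hk =>
    Icc_subset_Icc_right (hsteps k hk) (iterate_add_mem_Icc hD.le hδ k (hsteps k hk))
  calc ENNReal.ofReal (5 / 4) ^ (r / D - 1) * μ (ball x r)
      ≤ ENNReal.ofReal (5 / 4) ^ N * μ (ball x r) := by
        gcongr
        exact ENNReal.rpow_sub_one_le_pow_floor (ENNReal.one_le_ofReal.2 (by norm_num)) _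
    _ ≤ μ (ball x ((fun ρ => ρ + δ ρ)^[N] r)) :=
        pow_mul_le_apply_iterate _ _ _ _ hgrow r N fun k hk => hradii k hk.le
    _ ≤ μ (ball x (2 * r)) := measure_mono (ball_subset_ball (hradii N le_rfl).2)

/-- If the metric balls around `x` grow by a factor at least `5/4` when the radius increases
from `ρ` to `ρ + δ(ρ)` for `ρ ∈ [r, 2r]`, then `μ(B(x,2r)) ≥ (5/4)^(r/δ(2r) − 1) · μ(B(x,r))`. -/
theorem stmt1 {X : Type*} [PseudoMetricSpace X] [MeasurableSpace X] [BorelSpace X]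
    (μ : Measure X) (x : X) (r : ℝ) (hr : 0 < r)
    (hμ : ∀ ρ ∈ Ioc (0 : ℝ) (2 * r), 0 < μ (ball x ρ) ∧ μ (ball x ρ) < ⊤)
    (δ : ℝ → ℝ) (hδpos : ∀ ρ ∈ Ioc (0 : ℝ) (2 * r), 0 < δ ρ)
    (hδmono : MonotoneOn δ (Ioc (0 : ℝ) (2 * r)))
    (hgrow : ∀ ρ ∈ Icc r (2 * r),
      ENNReal.ofReal (5 / 4) * μ (ball x ρ) ≤ μ (ball x (ρ + δ ρ))) :
    ENNReal.ofReal (5 / 4) ^ (r / δ (2 * r) - 1) * μ (ball x r) ≤ μ (ball x (2 * r)) :=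
  stmt1_general μ x r hr δ hδpos hδmono hgrow
end

section
/- (Oscillation iteration.) Let ν₀ ∈ (0, 1), K ≥ 0 and R > 0. Let ω : (0, R] → [0, ∞) be nondecreasing and γ : (0, R] → (0, 1) be nonincreasing, and suppose ω(ν₀ ρ) ≤ γ(ρ) ω(ρ) + ρ² K for every ρ ∈ (0, R]. Then for every μ ∈ (0, 1) and every r ∈ (0, R], ω(r) ≤ γ(r)^{−1} (r/R)^{(1−μ) ln γ(r)/ln ν₀} ω(R) + (K R² / (1 − γ(r))) · (r/R)^{2μ}. -/
open Set Real

/-!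
Fix `r` and put `g = γ(r)`. For `ρ ∈ [r, s] ⊆ (0, R]`, monotonicity of `γ` gives
`ω(ν₀ρ) ≤ g ω(ρ) + s² K`, so iterating this `m` times from the intermediate radius
`s = R (r/R)^μ` yields `ω(ν₀ᵐ s) ≤ gᵐ ω(s) + s² K / (1 - g)`. Choosing `m` with
`ν₀^(m+1) s < r ≤ ν₀ᵐ s`, monotonicity of `ω` bounds `ω(r)` by this. Since
`g = ν₀ ^ log_{ν₀} g`, the condition `ν₀^(m+1) < (r/R)^(1-μ)` turns into
`g^(m+1) ≤ (r/R)^((1-μ) log g / log ν₀)`, and `s² = R² (r/R)^(2μ)`.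
-/

theorem apply_pow_mul_le_pow_mul_add_div_one_sub {ω : ℝ → ℝ} {ν g B r s : ℝ}
    (hν : ν ∈ Icc (0 : ℝ) 1) (hg : g ∈ Ico (0 : ℝ) 1) (hB : 0 ≤ B) (hs : 0 ≤ s)
    (hstep : ∀ ρ ∈ Icc r s, ω (ν * ρ) ≤ g * ω ρ + B) :
    ∀ n : ℕ, r ≤ ν ^ n * s → ω (ν ^ n * s) ≤ g ^ n * ω s + B / (1 - g) := by
  have h1g : 0 < 1 - g := by linarith [hg.2]
  intro n
  induction n with
  | zero =>
    intro _
    simp only [pow_zero, one_mul, le_add_iff_nonneg_right]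
    positivity
  | succ n ih =>
    intro hr
    have hle : ν ^ n * s ≤ s := mul_le_of_le_one_left hs (pow_le_one₀ hν.1 hν.2)
    have hdec : ν ^ (n + 1) * s ≤ ν ^ n * s := by
      rw [pow_succ', mul_assoc]
      exact mul_le_of_le_one_left (mul_nonneg (pow_nonneg hν.1 n) hs) hν.2
    calc ω (ν ^ (n + 1) * s) = ω (ν * (ν ^ n * s)) := by ring_nf
      _ ≤ g * ω (ν ^ n * s) + B := hstep _ ⟨hr.trans hdec, hle⟩
      _ ≤ g * (g ^ n * ω s + B / (1 - g)) + B := by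
        gcongr
        · exact hg.1
        · exact ih (hr.trans hdec)
      _ = g ^ (n + 1) * ω s + B / (1 - g) := by field_simp; ring

theorem pow_le_rpow_of_pow_le_rpow {ν g t a : ℝ} (hν : ν ∈ Ioo (0 : ℝ) 1)
    (hg : g ∈ Ioc (0 : ℝ) 1) (ht : 0 < t) {n : ℕ} (h : ν ^ n ≤ t ^ a) :
    g ^ n ≤ t ^ (a * log g / log ν) := by
  have hc : 0 ≤ logb ν g := logb_nonneg_of_base_lt_one hν.1 hν.2 hg.1 hg.2
  calc g ^ n = (ν ^ n) ^ logb ν g := by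
        rw [← rpow_natCast_mul hν.1.le, mul_comm, rpow_mul_natCast hν.1.le,
          rpow_logb hν.1 hν.2.ne hg.1]
    _ ≤ (t ^ a) ^ logb ν g := rpow_le_rpow (pow_nonneg hν.1.le n) h hc
    _ = t ^ (a * log g / log ν) := by rw [← rpow_mul ht.le, logb, mul_div_assoc]

theorem exists_pow_succ_lt_div_and_le_pow_mul {ν r s : ℝ} (hν : ν ∈ Ioo (0 : ℝ) 1) (hr : 0 < r)
    (hrs : r ≤ s) : ∃ m : ℕ, ν ^ (m + 1) < r / s ∧ ν ^ m * s ∈ Icc r s := by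
  have hs : 0 < s := hr.trans_le hrs
  obtain ⟨m, hm_lt, hm_le⟩ :=
    exists_nat_pow_near_of_lt_one (div_pos hr hs) ((div_le_one hs).2 hrs) hν.1 hν.2
  exact ⟨m, hm_lt, (div_le_iff₀ hs).1 hm_le,
    mul_le_of_le_one_left hs.le (pow_le_one₀ hν.1.le hν.2.le)⟩

theorem mul_div_rpow_mem_Icc {r R μ : ℝ} (hr : 0 < r) (hrR : r ≤ R) (hμ : μ ∈ Icc (0 : ℝ) 1) :
    R * (r / R) ^ μ ∈ Icc r R := by
  have hR : 0 < R := hr.trans_le hrR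
  have ht : r / R ≤ 1 := (div_le_one hR).2 hrR
  constructor
  · calc r = R * (r / R) := by field_simp
      _ ≤ R * (r / R) ^ μ := by
        gcongr
        exact self_le_rpow_of_le_one (by positivity) ht hμ.2
  · exact mul_le_of_le_one_right hR.le (rpow_le_one (by positivity) ht hμ.1)

theorem div_mul_div_rpow {r R : ℝ} (hr : 0 < r) (hR : 0 < R) (μ : ℝ) :
    r / (R * (r / R) ^ μ) = (r / R) ^ (1 - μ) := by
  rw [rpow_sub (by positivity), rpow_one]
  field_simp

theorem mul_div_rpow_sq {r R : ℝ} (hr : 0 < r) (hR : 0 < R) (μ : ℝ) :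
    (R * (r / R) ^ μ) ^ 2 = R ^ 2 * (r / R) ^ (2 * μ) := by
  rw [mul_pow, ← rpow_mul_natCast (by positivity)]
  ring_nf

/-- Oscillation iteration: if `ω(ν₀ρ) ≤ γ(ρ) ω(ρ) + ρ² K` for all `ρ ∈ (0, R]`, then for every
`μ ∈ (0,1)` and `r ∈ (0, R]`,
`ω(r) ≤ γ(r)⁻¹ (r/R)^((1−μ) ln γ(r)/ln ν₀) ω(R) + (K R²/(1 − γ(r))) (r/R)^(2μ)`. -/
theorem stmt4 (ν₀ : ℝ) (hν₀ : ν₀ ∈ Set.Ioo (0 : ℝ) 1) (K R : ℝ) (hK : 0 ≤ K) (hR : 0 < R)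
    (ω γ : ℝ → ℝ)
    (hω0 : ∀ ρ ∈ Set.Ioc (0 : ℝ) R, 0 ≤ ω ρ)
    (hωmono : MonotoneOn ω (Set.Ioc (0 : ℝ) R))
    (hγ : ∀ ρ ∈ Set.Ioc (0 : ℝ) R, γ ρ ∈ Set.Ioo (0 : ℝ) 1)
    (hγanti : AntitoneOn γ (Set.Ioc (0 : ℝ) R))
    (hiter : ∀ ρ ∈ Set.Ioc (0 : ℝ) R, ω (ν₀ * ρ) ≤ γ ρ * ω ρ + ρ ^ 2 * K) :
    ∀ μ ∈ Set.Ioo (0 : ℝ) 1, ∀ r ∈ Set.Ioc (0 : ℝ) R,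
      ω r ≤ (γ r)⁻¹ * (r / R) ^ ((1 - μ) * Real.log (γ r) / Real.log ν₀) * ω R
        + (K * R ^ 2 / (1 - γ r)) * (r / R) ^ (2 * μ) := by
  rintro μ ⟨hμ0, hμ1⟩ r hr
  obtain ⟨hg0, hg1⟩ := hγ r hr
  set s := R * (r / R) ^ μ
  obtain ⟨hrs, hsR⟩ : s ∈ Icc r R := mul_div_rpow_mem_Icc hr.1 hr.2 ⟨hμ0.le, hμ1.le⟩
  have hs0 : 0 ≤ s := hr.1.le.trans hrs
  have hIcc : ∀ {ρ}, ρ ∈ Icc r s → ρ ∈ Ioc 0 R := fun h => ⟨hr.1.trans_le h.1, h.2.trans hsR⟩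
  have hstep : ∀ ρ ∈ Icc r s, ω (ν₀ * ρ) ≤ γ r * ω ρ + s ^ 2 * K := fun ρ hρ => by
    calc ω (ν₀ * ρ) ≤ γ ρ * ω ρ + ρ ^ 2 * K := hiter ρ (hIcc hρ)
      _ ≤ γ r * ω ρ + s ^ 2 * K := by
        gcongr
        · exact hω0 ρ (hIcc hρ)
        · exact hγanti hr (hIcc hρ) hρ.1
        · exact (hIcc hρ).1.le
        · exact hρ.2
  obtain ⟨m, hm_lt, hms⟩ := exists_pow_succ_lt_div_and_le_pow_mul hν₀ hr.1 hrs
  rw [div_mul_div_rpow hr.1 hR] at hm_lt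
  have hgm : γ r ^ m ≤ (γ r)⁻¹ * (r / R) ^ ((1 - μ) * log (γ r) / log ν₀) := by
    rw [le_inv_mul_iff₀ hg0, ← pow_succ']
    exact pow_le_rpow_of_pow_le_rpow hν₀ ⟨hg0, hg1.le⟩ (div_pos hr.1 hR) hm_lt.le
  calc ω r ≤ ω (ν₀ ^ m * s) := hωmono hr (hIcc hms) hms.1
    _ ≤ γ r ^ m * ω s + s ^ 2 * K / (1 - γ r) :=
      apply_pow_mul_le_pow_mul_add_div_one_sub ⟨hν₀.1.le, hν₀.2.le⟩ ⟨hg0.le, hg1⟩ (by positivity)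
        hs0 hstep m hms.1
    _ ≤ _ := by
      rw [mul_div_rpow_sq hr.1 hR]
      gcongr ?_ + ?_
      · exact mul_le_mul hgm (hωmono (hIcc ⟨hrs, le_rfl⟩) ⟨hR, le_rfl⟩ hsR)
          (hω0 s (hIcc ⟨hrs, le_rfl⟩))
          (mul_nonneg (inv_nonneg.2 hg0.le) (rpow_nonneg (div_pos hr.1 hR).le _))
      · exact (by ring : _ = _).le
end

section
/- (Analytic content of the continuity theorem.) Let σ > 1, λ = (5σ − 1)/(σ − 1), C > 1, ν₀ ∈ (0, 1), μ ∈ (0, 1), R ∈ (0, 1) and A ≥ 0. Let δ : (0, R] → (0, ∞) satisfy δ(r) < r for all r, lim_{r→0⁺} δ(r)/r = 0, and the growth condition lim_{r→0⁺} (ln r) · ln( 1 − (1/(2C)) exp( −2 (r/δ(r))^{λ} ) ) = +∞. Define C_H(r) = C · exp( 2 (ν₀ r / δ(ν₀ r))^{λ} ) and α(r) = (1 − μ) · ln(1 − 1/(2 C_H(r))) / ln ν₀. If ω : (0, R] → [0, ∞) satisfies ω(r) ≤ A (r/R)^{α(r)} + A · C_H(r) · (r/R)^{2μ} for all r ∈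 (0, R], then lim_{r→0⁺} ω(r) = 0. -/
open Filter Set

/-! Put `F(r) = ln(1 - 1/(2 C_H(r)))`, so that `α(r) = (1 - μ) F(r) / ln ν₀`. After the
substitution `s = ν₀ r`, the growth condition says `ln r · F(r) → +∞`. Since `F` is negative and
bounded (because `C_H ≥ C > 1`), this makes `α(r) ln(r/R) → -∞`, so the first term vanishes.
Moreover `-F(r) ≤ 1/C_H(r)`, so `ln r · F(r) ≥ 1` forces `C_H(r) ≤ -ln r`, and the second term
is `O(|ln r| r^{2μ}) → 0`. -/

open Real Topology

lemma neg_log_one_sub_le_two_mul {x : ℝ} (hx₀ : 0 ≤ x) (hx : x ≤ 1 / 2) :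
    -log (1 - x) ≤ 2 * x := by
  have h1x : 0 < 1 - x := by linarith
  have hlog := one_sub_inv_le_log_of_pos h1x
  have hinv : (1 - x)⁻¹ ≤ 1 + 2 * x := by
    rw [inv_le_iff_one_le_mul₀ h1x]; nlinarith
  linarith

section LogOneSubOneDivTwoMul

variable {C K : ℝ}

lemma log_one_sub_one_div_two_mul_nonpos (hK : 1 / 2 ≤ K) : log (1 - 1 / (2 * K)) ≤ 0 := by
  have : 1 / (2 * K) ≤ 1 := by rw [div_le_one (by linarith)]; linarith
  exact log_nonpos (by linarith) (by linarith [one_div_pos.2 (by linarith : 0 < 2 * K)])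

lemma log_one_sub_one_div_two_mul_le_of_le (hC : 1 / 2 < C) (hCK : C ≤ K) :
    log (1 - 1 / (2 * C)) ≤ log (1 - 1 / (2 * K)) := by
  have : 1 / (2 * K) ≤ 1 / (2 * C) := one_div_le_one_div_of_le (by linarith) (by linarith)
  have : 1 / (2 * C) < 1 := by rw [div_lt_one (by linarith)]; linarith
  exact log_le_log (by linarith) (by linarith)

lemma neg_log_one_sub_one_div_two_mul_le (hK : 1 ≤ K) : -log (1 - 1 / (2 * K)) ≤ 1 / K := by
  have hK₀ : 0 < K := by linarith
  calc -log (1 - 1 / (2 * K)) ≤ 2 * (1 / (2 * K)) :=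
        neg_log_one_sub_le_two_mul (by positivity)
          (one_div_le_one_div_of_le (by norm_num) (by linarith))
    _ = 1 / K := by field_simp

lemma le_neg_log_of_one_le_log_mul {r : ℝ} (hK : 1 ≤ K)
    (h : 1 ≤ log r * log (1 - 1 / (2 * K))) : K ≤ -log r := by
  have hK₀ : 0 < K := by linarith
  have hF := neg_log_one_sub_one_div_two_mul_le hK
  have hF₀ := log_one_sub_one_div_two_mul_nonpos (by linarith : 1 / 2 ≤ K)
  have hr : 0 ≤ -log r := by nlinarith
  have : 1 ≤ -log r * (1 / K) := by nlinarith [mul_le_mul_of_nonneg_left hF hr]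
  rwa [mul_one_div, le_div_iff₀ hK₀, one_mul] at this

end LogOneSubOneDivTwoMul

lemma tendsto_log_mul_comp_const_mul {G : ℝ → ℝ} {a ν : ℝ} (hν₀ : 0 < ν) (hν₁ : ν ≤ 1)
    (hG : ∀ᶠ s in 𝓝[>] 0, a ≤ G s) (h : Tendsto (fun s => log s * G s) (𝓝[>] 0) atTop) :
    Tendsto (fun r => log r * G (ν * r)) (𝓝[>] 0) atTop := by
  have hscale : Tendsto (ν * ·) (𝓝[>] (0 : ℝ)) (𝓝[>] 0) :=
    tendsto_iff_comap.2 (comap_mulLeft_nhdsGT_zero hν₀).ge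
  have hlogν : 0 ≤ -log ν := neg_nonneg.2 (log_nonpos hν₀.le hν₁)
  refine (tendsto_atTop_add_left_of_le' _ (-log ν * a) (f := fun r => -log ν * G (ν * r)) ?_
    (h.comp hscale)).congr' ?_
  · filter_upwards [hscale.eventually hG] with r hr
    exact mul_le_mul_of_nonneg_left hr hlogν
  · filter_upwards [self_mem_nhdsWithin] with r (hr : 0 < r)
    simp only [Function.comp, log_mul hν₀.ne' hr.ne']
    ring

lemma tendsto_div_rpow_of_tendsto_log_mul_atBot {α : ℝ → ℝ} {R M : ℝ} (hR : 0 < R)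
    (hα : ∀ᶠ r in 𝓝[>] 0, |α r| ≤ M) (h : Tendsto (fun r => log r * α r) (𝓝[>] 0) atBot) :
    Tendsto (fun r => (r / R) ^ α r) (𝓝[>] 0) (𝓝 0) := by
  have hexp : Tendsto (fun r => -log R * α r + log r * α r) (𝓝[>] 0) atBot := by
    refine tendsto_atBot_add_left_of_ge' _ (|log R| * M) ?_ h
    filter_upwards [hα] with r hr
    calc -log R * α r ≤ |log R| * |α r| := by rw [← abs_mul, neg_mul]; exact neg_le_abs _
      _ ≤ |log R| * M := mul_le_mul_of_nonneg_left hr (abs_nonneg _)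
  refine (tendsto_exp_atBot.comp hexp).congr' ?_
  filter_upwards [self_mem_nhdsWithin] with r (hr : 0 < r)
  rw [Function.comp, rpow_def_of_pos (div_pos hr hR), log_div hr.ne' hR.ne']
  ring_nf

lemma tendsto_mul_div_rpow_of_abs_le_neg_log {K : ℝ → ℝ} {R p : ℝ} (hR : 0 ≤ R) (hp : 0 < p)
    (hK : ∀ᶠ r in 𝓝[>] 0, |K r| ≤ -log r) :
    Tendsto (fun r => K r * (r / R) ^ p) (𝓝[>] 0) (𝓝 0) := by
  have hbound : Tendsto (fun r => -(log r * r ^ p) / R ^ p) (𝓝[>] 0) (𝓝 0) := by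
    simpa using (tendsto_log_mul_rpow_nhdsGT_zero hp).neg.div_const (R ^ p)
  refine squeeze_zero_norm' ?_ hbound
  filter_upwards [hK, self_mem_nhdsWithin] with r hr (hr₀ : 0 < r)
  rw [norm_mul, Real.norm_eq_abs, Real.norm_of_nonneg (rpow_nonneg (div_nonneg hr₀.le hR) _),
    div_rpow hr₀.le hR, neg_mul_eq_neg_mul, mul_div_assoc]
  exact mul_le_mul_of_nonneg_right hr (by positivity)

lemma tendsto_div_rpow_harnack_exponent {C μ ν₀ R : ℝ} {K : ℝ → ℝ} (hC : 1 / 2 < C)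
    (hμ : μ < 1) (hν₀ : ν₀ ∈ Ioo 0 1) (hR : 0 < R) (hK : ∀ᶠ r in 𝓝[>] 0, C ≤ K r)
    (hlim : Tendsto (fun r => log r * log (1 - 1 / (2 * K r))) (𝓝[>] 0) atTop) :
    Tendsto (fun r => (r / R) ^ ((1 - μ) * log (1 - 1 / (2 * K r)) / log ν₀)) (𝓝[>] 0)
      (𝓝 0) := by
  have hc : (1 - μ) / log ν₀ < 0 := div_neg_of_pos_of_neg (by linarith) (log_neg hν₀.1 hν₀.2)
  refine tendsto_div_rpow_of_tendsto_log_mul_atBot hR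
    (M := |(1 - μ) / log ν₀| * -log (1 - 1 / (2 * C))) ?_
    ((hlim.const_mul_atTop_of_neg hc).congr fun r => by ring)
  filter_upwards [hK] with r hr
  have hF₀ := log_one_sub_one_div_two_mul_nonpos (hC.le.trans hr)
  have hFC := log_one_sub_one_div_two_mul_le_of_le hC hr
  rw [mul_div_right_comm, abs_mul]
  exact mul_le_mul_of_nonneg_left (abs_le.2 ⟨by linarith, by linarith⟩) (abs_nonneg _)

lemma tendsto_mul_div_rpow_of_tendsto_log_mul_log_one_sub {K : ℝ → ℝ} {R p : ℝ} (hR : 0 ≤ R)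
    (hp : 0 < p) (hK : ∀ᶠ r in 𝓝[>] 0, 1 ≤ K r)
    (hlim : Tendsto (fun r => log r * log (1 - 1 / (2 * K r))) (𝓝[>] 0) atTop) :
    Tendsto (fun r => K r * (r / R) ^ p) (𝓝[>] 0) (𝓝 0) := by
  refine tendsto_mul_div_rpow_of_abs_le_neg_log hR hp ?_
  filter_upwards [hK, hlim.eventually_ge_atTop 1] with r hK₁ hr
  rw [abs_of_pos (by linarith)]
  exact le_neg_log_of_one_le_log_mul hK₁ hr

/-- `C_H(r)` of the paper is `harnackConst C λ δ (ν₀ * r)`. -/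
noncomputable def harnackConst (C κ : ℝ) (δ : ℝ → ℝ) (s : ℝ) : ℝ := C * exp (2 * (s / δ s) ^ κ)

lemma le_harnackConst {C κ s : ℝ} {δ : ℝ → ℝ} (hC : 0 ≤ C) (hs : 0 ≤ s) (hδ : 0 ≤ δ s) :
    C ≤ harnackConst C κ δ s :=
  le_mul_of_one_le_right hC (one_le_exp (by positivity))

lemma one_div_two_mul_harnackConst (C κ : ℝ) (δ : ℝ → ℝ) (s : ℝ) :
    1 / (2 * harnackConst C κ δ s) = 1 / (2 * C) * exp (-2 * (s / δ s) ^ κ) := by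
  rw [harnackConst, neg_mul, exp_neg]
  ring

theorem stmt7_general (σ C ν₀ μ R A : ℝ) (hC : 1 < C)
    (hν₀ : ν₀ ∈ Set.Ioo (0 : ℝ) 1) (hμ : μ ∈ Set.Ioo (0 : ℝ) 1)
    (hR : R ∈ Set.Ioo (0 : ℝ) 1)
    (δ : ℝ → ℝ)
    (hδ : ∀ r ∈ Set.Ioc (0 : ℝ) R, 0 < δ r ∧ δ r < r)
    (hgrow : Tendsto
      (fun r => Real.log r *
        Real.log (1 - (1 / (2 * C)) * Real.exp (-2 * (r / δ r) ^ ((5 * σ - 1) / (σ - 1)))))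
      (nhdsWithin 0 (Set.Ioi 0)) atTop)
    (ω : ℝ → ℝ)
    (hω : ∀ r ∈ Set.Ioc (0 : ℝ) R, 0 ≤ ω r ∧
      ω r ≤
        A * (r / R) ^
          ((1 - μ) *
            Real.log (1 - 1 / (2 *
              (C * Real.exp (2 * (ν₀ * r / δ (ν₀ * r)) ^ ((5 * σ - 1) / (σ - 1)))))) /
            Real.log ν₀)
        + A * (C * Real.exp (2 * (ν₀ * r / δ (ν₀ * r)) ^ ((5 * σ - 1) / (σ - 1)))) *
            (r / R) ^ (2 * μ)) :
    Tendsto ω (nhdsWithin 0 (Set.Ioi 0)) (nhds 0) := by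
  set κ := (5 * σ - 1) / (σ - 1)
  have hIoc : Ioc 0 R ∈ 𝓝[>] 0 := Ioc_mem_nhdsGT hR.1
  have hCH : ∀ᶠ s in 𝓝[>] 0, C ≤ harnackConst C κ δ s := by
    filter_upwards [hIoc] with s hs using le_harnackConst (by linarith) hs.1.le (hδ s hs).1.le
  have hgrow' : Tendsto (fun s => log s * log (1 - 1 / (2 * harnackConst C κ δ s))) (𝓝[>] 0)
      atTop := by
    simpa only [one_div_two_mul_harnackConst] using hgrow
  have hlim := tendsto_log_mul_comp_const_mul hν₀.1 hν₀.2.le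
    (hCH.mono fun s hs => log_one_sub_one_div_two_mul_le_of_le (by linarith) hs)
    hgrow'
  have hK := eventually_nhdsGT_zero_mul_left hν₀.1 hCH
  have hT₁ := tendsto_div_rpow_harnack_exponent (by linarith) hμ.2 hν₀ hR.1 hK hlim
  have hT₂ := tendsto_mul_div_rpow_of_tendsto_log_mul_log_one_sub hR.1.le
    (by linarith [hμ.1] : 0 < 2 * μ) (hK.mono fun r hr => hC.le.trans hr) hlim
  have hbound := (hT₁.const_mul A).add (hT₂.const_mul A)
  rw [mul_zero, add_zero] at hbound
  refine tendsto_of_tendsto_of_tendsto_of_le_of_le' tendsto_const_nhds hbound ?_ ?_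
  · filter_upwards [hIoc] with r hr using (hω r hr).1
  · filter_upwards [hIoc] with r hr
    exact (hω r hr).2.trans_eq (by simp only [harnackConst, mul_assoc])

/-- Analytic content of the continuity theorem: with `λ = (5σ−1)/(σ−1)`,
`C_H(r) = C exp(2 (ν₀ r/δ(ν₀ r))^λ)` and
`α(r) = (1−μ) ln(1 − 1/(2 C_H(r)))/ln ν₀`, if the non-doubling order `δ` satisfies the
growth condition `(ln r)·ln(1 − (1/(2C)) exp(−2 (r/δ(r))^λ)) → +∞` as `r → 0⁺`, and
`ω(r) ≤ A (r/R)^{α(r)} + A C_H(r) (r/R)^{2μ}` for all `r ∈ (0,R]`, then `ω(r) → 0`. -/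
theorem stmt7 (σ C ν₀ μ R A : ℝ) (hσ : 1 < σ) (hC : 1 < C)
    (hν₀ : ν₀ ∈ Set.Ioo (0 : ℝ) 1) (hμ : μ ∈ Set.Ioo (0 : ℝ) 1)
    (hR : R ∈ Set.Ioo (0 : ℝ) 1) (hA : 0 ≤ A)
    (δ : ℝ → ℝ)
    (hδ : ∀ r ∈ Set.Ioc (0 : ℝ) R, 0 < δ r ∧ δ r < r)
    (hδlim : Tendsto (fun r => δ r / r) (nhdsWithin 0 (Set.Ioi 0)) (nhds 0))
    (hgrow : Tendsto
      (fun r => Real.log r *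
        Real.log (1 - (1 / (2 * C)) * Real.exp (-2 * (r / δ r) ^ ((5 * σ - 1) / (σ - 1)))))
      (nhdsWithin 0 (Set.Ioi 0)) atTop)
    (ω : ℝ → ℝ)
    (hω : ∀ r ∈ Set.Ioc (0 : ℝ) R, 0 ≤ ω r ∧
      ω r ≤
        A * (r / R) ^
          ((1 - μ) *
            Real.log (1 - 1 / (2 *
              (C * Real.exp (2 * (ν₀ * r / δ (ν₀ * r)) ^ ((5 * σ - 1) / (σ - 1)))))) /
            Real.log ν₀)
        + A * (C * Real.exp (2 * (ν₀ * r / δ (ν₀ * r)) ^ ((5 * σ - 1) / (σ - 1)))) *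
            (r / R) ^ (2 * μ)) :
    Tendsto ω (nhdsWithin 0 (Set.Ioi 0)) (nhds 0) :=
  stmt7_general σ C ν₀ μ R A hC hν₀ hμ hR δ hδ hgrow ω hω
end

section
/- Let h : (0, 1] → (0, ∞) be nondecreasing, and define f(x) = exp( −∫ₓ¹ dt/(t h(t)) ) for x ∈ (0, 1]. Then for every r ∈ (0, 1], f(r)/f(r/2) ≥ exp( 1/(2 h(r)) ). In particular, if additionally lim_{x→0⁺} h(x) = 0, then lim_{r→0⁺} f(r)/f(r/2) = +∞. -/
open Filter Set intervalIntegral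

/-! On `[r/2, r]` the integrand `1/(t h(t))` is at least `1/(r h(r))`, because `t ↦ t h(t)` is
nondecreasing; hence `log (f(r)/f(r/2)) = ∫_{r/2}^r dt/(t h(t)) ≥ (r/2) · 1/(r h(r)) = 1/(2h(r))`. -/

lemma AntitoneOn.sub_mul_le_intervalIntegral {g : ℝ → ℝ} {a b : ℝ} (hab : a ≤ b)
    (hg : AntitoneOn g (Icc a b)) : (b - a) * g b ≤ ∫ t in a..b, g t := by
  have hb : b ∈ Icc a b := right_mem_Icc.mpr hab
  calc (b - a) * g b = ∫ _ in a..b, g b := by simp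
    _ ≤ ∫ t in a..b, g t :=
      integral_mono_on hab intervalIntegrable_const
        (AntitoneOn.intervalIntegrable (by rwa [uIcc_of_le hab])) fun t ht ↦ hg ht hb ht.2

lemma antitoneOn_one_div_mul_self {h : ℝ → ℝ} {s : Set ℝ} (hs : s ⊆ Ioi 0)
    (hpos : ∀ x ∈ s, 0 < h x) (hmono : MonotoneOn h s) :
    AntitoneOn (fun t ↦ 1 / (t * h t)) s := fun x hx _ hy hxy ↦
  one_div_le_one_div_of_le (mul_pos (hs hx) (hpos x hx))
    (mul_le_mul hxy (hmono hx hy hxy) (hpos x hx).le (hs hy).le)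

lemma exp_neg_integral_div_exp_neg_integral {g : ℝ → ℝ} {a b c : ℝ}
    (hab : IntervalIntegrable g MeasureTheory.volume a b)
    (hbc : IntervalIntegrable g MeasureTheory.volume b c) :
    Real.exp (-∫ t in b..c, g t) / Real.exp (-∫ t in a..c, g t) = Real.exp (∫ t in a..b, g t) := by
  rw [← Real.exp_sub, ← integral_add_adjacent_intervals hab hbc]
  ring_nf

lemma exp_one_div_two_mul_le_div_half {h f : ℝ → ℝ}
    (hpos : ∀ x ∈ Ioc (0 : ℝ) 1, 0 < h x) (hmono : MonotoneOn h (Ioc (0 : ℝ) 1))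
    (hf : ∀ x ∈ Ioc (0 : ℝ) 1, f x = Real.exp (-(∫ t in x..1, 1 / (t * h t))))
    {r : ℝ} (hr : r ∈ Ioc (0 : ℝ) 1) :
    Real.exp (1 / (2 * h r)) ≤ f r / f (r / 2) := by
  obtain ⟨hr0, hr1⟩ := hr
  have hanti := antitoneOn_one_div_mul_self (fun _ hx ↦ hx.1) hpos hmono
  have hanti_on {a b : ℝ} (ha : 0 < a) (hb : b ≤ 1) : AntitoneOn (fun t ↦ 1 / (t * h t)) (Icc a b) :=
    hanti.mono (Icc_subset_Ioc ha hb)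
  have hintegrable {a b : ℝ} (ha : 0 < a) (hab : a ≤ b) (hb : b ≤ 1) :
      IntervalIntegrable (fun t ↦ 1 / (t * h t)) MeasureTheory.volume a b :=
    AntitoneOn.intervalIntegrable (by rw [uIcc_of_le hab]; exact hanti_on ha hb)
  rw [hf r ⟨hr0, hr1⟩, hf (r / 2) ⟨by positivity, by linarith⟩,
    exp_neg_integral_div_exp_neg_integral (hintegrable (by positivity) (by linarith) hr1)
      (hintegrable hr0 hr1 le_rfl), Real.exp_le_exp]
  calc 1 / (2 * h r) = (r - r / 2) * (1 / (r * h r)) := by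
        field_simp [(hpos r ⟨hr0, hr1⟩).ne']; ring
    _ ≤ _ := (hanti_on (by positivity) hr1).sub_mul_le_intervalIntegral (by linarith)

lemma tendsto_exp_one_div_two_mul_atTop {h : ℝ → ℝ} {l : Filter ℝ} (hpos : ∀ᶠ x in l, 0 < h x)
    (hlim : Tendsto h l (nhds 0)) : Tendsto (fun x ↦ Real.exp (1 / (2 * h x))) l atTop := by
  have hinv : Tendsto (fun x ↦ (h x)⁻¹) l atTop :=
    tendsto_inv_nhdsGT_zero.comp (tendsto_nhdsWithin_iff.mpr ⟨hlim, hpos⟩)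
  refine Real.tendsto_exp_atTop.comp ((hinv.atTop_div_const two_pos).congr fun x ↦ ?_)
  simp only [mul_inv, div_eq_mul_inv]
  ring

/-- For `f(x) = exp(−∫ₓ¹ dt/(t h(t)))` with `h` nondecreasing and positive on `(0,1]`,
one has `f(r)/f(r/2) ≥ exp(1/(2h(r)))`; in particular, if moreover `h(x) → 0` as `x → 0⁺`,
then `f(r)/f(r/2) → ∞` as `r → 0⁺` (the associated subunit balls are non-doubling). -/
theorem stmt11 (h : ℝ → ℝ)
    (hpos : ∀ x ∈ Set.Ioc (0 : ℝ) 1, 0 < h x)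
    (hmono : MonotoneOn h (Set.Ioc (0 : ℝ) 1))
    (f : ℝ → ℝ)
    (hf : ∀ x ∈ Set.Ioc (0 : ℝ) 1, f x = Real.exp (-(∫ t in x..1, 1 / (t * h t)))) :
    (∀ r ∈ Set.Ioc (0 : ℝ) 1, Real.exp (1 / (2 * h r)) ≤ f r / f (r / 2)) ∧
    (Tendsto h (nhdsWithin 0 (Set.Ioi 0)) (nhds 0) →
      Tendsto (fun r => f r / f (r / 2)) (nhdsWithin 0 (Set.Ioi 0)) atTop) := by
  have hbound r (hr : r ∈ Ioc (0 : ℝ) 1) := exp_one_div_two_mul_le_div_half hpos hmono hf hr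
  refine ⟨hbound, fun hlim ↦ ?_⟩
  have hmem : ∀ᶠ r in nhdsWithin (0 : ℝ) (Ioi 0), r ∈ Ioc (0 : ℝ) 1 :=
    Ioc_mem_nhdsGT one_pos
  exact tendsto_atTop_mono' _ (hmem.mono hbound)
    (tendsto_exp_one_div_two_mul_atTop (hmem.mono hpos) hlim)
end

section
/- Let λ > 1, define h : (0, 1) → (0, ∞) by h(x) = ( −ln( 1 − exp( −(−ln x)^{−1/3} ) ) )^{−1/λ}, and set δ(r) = r · h(r/2) for r ∈ (0, 1). Then for every C > 1, lim_{r→0⁺} (ln r) · ln( 1 − (1/(2C)) exp( −(r/δ(r))^{λ} ) ) = +∞. (That is, the non-doubling order δ(r) = r h(r/2) satisfies the growth condition required in the continuity theorem.) -/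
open Filter Set Real Topology

/-! Writing `Y = -ln(r/2)`, the defining formula of `h` gives
`exp(-(r/δ(r))^λ) = 1 - exp(-Y^(-1/3))` exactly, so the exponent `λ` disappears.
Since `-ln(1 - t) ≥ t` and `1 - e^(-v) ≥ v/e` for `v ≤ 1`, the expression is at least
`(Y - ln 2) · Y^(-1/3) / (2eC)`, which grows like `Y^(2/3)`. -/

lemma mul_exp_neg_one_le_one_sub_exp_neg {v : ℝ} (hv0 : 0 ≤ v) (hv1 : v ≤ 1) :
    exp (-1) * v ≤ 1 - exp (-v) :=
  calc exp (-1) * v ≤ exp (-v) * (exp v - 1) :=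
        mul_le_mul (exp_le_exp.2 (by linarith)) (by linarith [add_one_le_exp v]) hv0
          (exp_pos _).le
    _ = 1 - exp (-v) := by rw [mul_sub, ← exp_add, neg_add_cancel, exp_zero, mul_one]

lemma le_neg_log_one_sub {t : ℝ} (ht : t < 1) : t ≤ -log (1 - t) := by
  linarith [log_le_sub_one_of_pos (sub_pos.2 ht)]

lemma div_mul_rpow_neg_inv_rpow {lam r A : ℝ} (hlam : lam ≠ 0) (hr : r ≠ 0) (hA : 0 < A) :
    (r / (r * A ^ (-(1 / lam)))) ^ lam = A := by
  rw [div_mul_eq_div_div, div_self hr, one_div, ← rpow_neg hA.le, neg_neg, ← rpow_mul hA.le,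
    one_div, inv_mul_cancel₀ hlam, rpow_one]

lemma mul_rpow_two_thirds_le {C Y : ℝ} (hC : 1 / 2 ≤ C) (hY : 2 ≤ Y) :
    exp (-1) / (4 * C) * Y ^ (2 / 3 : ℝ) ≤
      (log 2 - Y) * log (1 - 1 / (2 * C) * (1 - exp (-Y ^ (-(1 / 3) : ℝ)))) := by
  have hC0 : 0 < C := by linarith
  set v := Y ^ (-(1 / 3) : ℝ) with hv
  have hv0 : 0 < v := rpow_pos_of_pos (by linarith) _
  have hv1 : v ≤ 1 := rpow_le_one_of_one_le_of_nonpos (by linarith) (by norm_num)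
  have hYv : Y * v = Y ^ (2 / 3 : ℝ) := by
    rw [hv, ← rpow_one_add' (by linarith) (by norm_num)]
    norm_num
  set t := 1 / (2 * C) * (1 - exp (-v))
  have ht : exp (-1) / (2 * C) * v ≤ t := by
    rw [div_eq_mul_one_div, mul_comm (exp (-1)), mul_assoc]
    exact mul_le_mul_of_nonneg_left (mul_exp_neg_one_le_one_sub_exp_neg hv0.le hv1)
      (by positivity)
  have ht1 : t < 1 :=
    calc t ≤ 1 * (1 - exp (-v)) :=
          mul_le_mul_of_nonneg_right ((div_le_one (by positivity)).2 (by linarith))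
            (by linarith [exp_le_one_iff.2 (neg_nonpos.2 hv0.le)])
      _ < 1 := by linarith [exp_pos (-v)]
  have hlog2 : log 2 ≤ Y / 2 := by linarith [log_two_lt_d9]
  calc exp (-1) / (4 * C) * Y ^ (2 / 3 : ℝ) = Y / 2 * (exp (-1) / (2 * C) * v) := by
        rw [← hYv]; field_simp; ring
    _ ≤ (Y - log 2) * t := mul_le_mul (by linarith) ht (by positivity) (by linarith)
    _ ≤ (Y - log 2) * -log (1 - t) :=
        mul_le_mul_of_nonneg_left (le_neg_log_one_sub ht1) (by linarith)
    _ = (log 2 - Y) * log (1 - t) := by ring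

lemma tendsto_sub_mul_log_one_sub_exp_atTop {C : ℝ} (hC : 1 / 2 ≤ C) :
    Tendsto (fun Y => (log 2 - Y) * log (1 - 1 / (2 * C) * (1 - exp (-Y ^ (-(1 / 3) : ℝ)))))
      atTop atTop := by
  refine tendsto_atTop_mono' _ ?_
    ((tendsto_rpow_atTop (by norm_num : (0 : ℝ) < 2 / 3)).const_mul_atTop
      (by positivity : 0 < exp (-1) / (4 * C)))
  filter_upwards [eventually_ge_atTop 2] with Y hY
  exact mul_rpow_two_thirds_le hC hY

/-- For `λ > 1`, `h(x) = (−ln(1 − exp(−(−ln x)^(−1/3))))^(−1/λ)` and `δ(r) = r h(r/2)`,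
the growth condition `(ln r)·ln(1 − (1/(2C)) exp(−(r/δ(r))^λ)) → +∞` as `r → 0⁺` holds
for every `C > 1`. -/
theorem stmt14 (lam : ℝ) (hlam : 1 < lam)
    (h : ℝ → ℝ)
    (hdef : ∀ x ∈ Set.Ioo (0 : ℝ) 1,
      h x = (-Real.log (1 - Real.exp (-((-Real.log x) ^ (-(1 / 3) : ℝ))))) ^ (-(1 / lam)))
    (δ : ℝ → ℝ) (hδ : ∀ r ∈ Set.Ioo (0 : ℝ) 1, δ r = r * h (r / 2)) :
    ∀ C : ℝ, 1 < C →
      Tendsto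
        (fun r => Real.log r *
          Real.log (1 - (1 / (2 * C)) * Real.exp (-((r / δ r) ^ lam))))
        (nhdsWithin 0 (Set.Ioi 0)) atTop := by
  intro C hC
  have hY : Tendsto (fun r => log 2 + -log r) (𝓝[>] 0) atTop :=
    tendsto_atTop_add_const_left _ _ (tendsto_neg_atBot_atTop.comp tendsto_log_nhdsGT_zero)
  refine ((tendsto_sub_mul_log_one_sub_exp_atTop (C := C) (by linarith)).comp hY).congr' ?_
  filter_upwards [Ioo_mem_nhdsGT one_pos] with r hr
  have hr2 : r / 2 ∈ Ioo (0 : ℝ) 1 := ⟨by linarith [hr.1], by linarith [hr.2]⟩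
  have hB : 1 - exp (-((-log (r / 2)) ^ (-(1 / 3) : ℝ))) ∈ Ioo (0 : ℝ) 1 := by
    have hv : 0 < (-log (r / 2)) ^ (-(1 / 3) : ℝ) :=
      rpow_pos_of_pos (neg_pos.2 (log_neg hr2.1 hr2.2)) _
    exact ⟨sub_pos.2 (exp_lt_one_iff.2 (neg_neg_of_pos hv)), sub_lt_self _ (exp_pos _)⟩
  rw [Function.comp_apply, hδ r hr, hdef _ hr2,
    div_mul_rpow_neg_inv_rpow (by linarith) hr.1.ne' (neg_pos.2 (log_neg hB.1 hB.2)),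
    neg_neg, exp_log hB.1, log_div hr.1.ne' two_ne_zero, neg_sub, ← sub_eq_add_neg, sub_sub_cancel]
end
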